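/- arXiv:2207.04557 — 9 statements merged into one kernel-verified Lean document; each statement's English description precedes it below -/
import Mathlib

section
/- Let a be an accuracy function and let c_i, c_j be marginal costs with 0 < c_i ≤ c_j. Define utilities u_i(m) = a(m) − c_i·m and u_j(m) = a(m) − c_j·m for m ≥ 0. Then sup_{m ≥ 0} u_i(m) ≥ sup_{m ≥ 0} u_j(m), and for every maximizer m_j* of u_j over [0, ∞) there exists a maximizer m_i* of u_i over [0, ∞) with m_i* ≥ m_j*. -/
open Set

/-- An agent with smaller marginal cost obtains at least as large
an optimal utility and an at-least-as-large optimal data contribution. -/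
theorem lower_cost_higher_utility_and_contribution
    (b a : ℝ → ℝ) (ci cj : ℝ) (hci : 0 < ci) (hcij : ci ≤ cj)
    (hb_cont : ContinuousOn b (Ici 0))
    (hb_mono : MonotoneOn b (Ici 0))
    (hb_conc : ConcaveOn ℝ (Ici 0) b)
    (ha_def : ∀ m, a m = max 0 (b m))
    (ha_zero : a 0 = 0)
    (ha_le_one : ∀ m ∈ Ici (0:ℝ), a m ≤ 1)
    (ui uj : ℝ → ℝ)
    (hui : ∀ m, ui m = a m - ci * m)
    (huj : ∀ m, uj m = a m - cj * m) :
    sSup (uj '' Ici 0) ≤ sSup (ui '' Ici 0) ∧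
    (∀ mj ∈ Ici (0:ℝ), IsMaxOn uj (Ici 0) mj →
      ∃ mi ∈ Ici (0:ℝ), IsMaxOn ui (Ici 0) mi ∧ mj ≤ mi) := by
  have hle : ∀ m ∈ Ici (0:ℝ), uj m ≤ ui m := by
    intro m hm
    rw [hui, huj]
    have : ci * m ≤ cj * m := mul_le_mul_of_nonneg_right hcij hm
    linarith
  have hui_bdd : BddAbove (ui '' Ici 0) := by
    refine ⟨1, ?_⟩
    rintro x ⟨m, hm, rfl⟩
    rw [hui]
    have h1 := ha_le_one m hm
    have h2 : 0 ≤ ci * m := mul_nonneg hci.le hm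
    linarith
  constructor
  · refine csSup_le ⟨uj 0, ⟨0, self_mem_Ici, rfl⟩⟩ ?_
    rintro x ⟨m, hm, rfl⟩
    exact le_trans (hle m hm) (le_csSup hui_bdd ⟨m, hm, rfl⟩)
  · intro mj hmj hmax
    have key : ∀ m ∈ Icc (0:ℝ) mj, ui m ≤ ui mj := by
      intro m hm
      have h1 : uj m ≤ uj mj := hmax (mem_Ici.mpr hm.1)
      rw [huj, huj] at h1
      rw [hui, hui]
      have h2 : ci * (mj - m) ≤ cj * (mj - m) :=
        mul_le_mul_of_nonneg_right hcij (by linarith [hm.2])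
      nlinarith
    set M : ℝ := max mj (1 / ci) with hM
    have hmjM : mj ≤ M := le_max_left _ _
    have hsub : Icc mj M ⊆ Ici (0:ℝ) := fun x hx => le_trans hmj hx.1
    have ha_cont : ContinuousOn a (Ici 0) := by
      have : a = fun m => max 0 (b m) := funext ha_def
      rw [this]
      exact continuousOn_const.sup hb_cont
    have hui_cont : ContinuousOn ui (Icc mj M) := by
      have : ui = fun m => a m - ci * m := funext hui
      rw [this]
      exact ((ha_cont.mono hsub).sub ((continuous_const.mul continuous_id).continuousOn))
    obtain ⟨mi, hmi, hmax_i⟩ :=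
      isCompact_Icc.exists_isMaxOn (nonempty_Icc.mpr hmjM) hui_cont
    refine ⟨mi, le_trans hmj hmi.1, ?_, hmi.1⟩
    have hmi_ge_mj : ui mj ≤ ui mi := hmax_i ⟨le_refl mj, hmjM⟩
    have hui0 : ui 0 = 0 := by rw [hui]; simp [ha_zero]
    intro m hm
    simp only [Set.mem_setOf_eq]
    rcases le_or_gt m mj with h | h
    · exact le_trans (key m ⟨hm, h⟩) hmi_ge_mj
    · rcases le_or_gt m M with h2 | h2
      · exact hmax_i ⟨h.le, h2⟩
      · have hM2 : 1 / ci < m := lt_of_le_of_lt (le_max_right mj (1/ci)) h2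
        have : 1 ≤ ci * m := by
          rw [div_lt_iff₀ hci] at hM2
          nlinarith
        have hm1 := ha_le_one m hm
        have : ui m ≤ 0 := by rw [hui]; linarith
        have h0 : ui 0 ≤ ui mj := key 0 ⟨le_refl 0, hmj⟩
        linarith [hui0]
end

section
/- Fix n agents with marginal costs c_1, …, c_n > 0 and an accuracy function a, and let the standard federated learning mechanism be [M(m)]_i = a(∑_j m_j) for every agent i. Then M is feasible and satisfies individual rationality. Moreover, let i₀ be an agent with c_{i₀} ≤ c_j for all j, and let m* ≥ 0 be any maximizer of m ↦ a(m) − c_{i₀}·m over [0, ∞). Then the profile m̂ defined by m̂_{i₀} = m* and m̂_j = 0 for all j ≠ i₀ is a pure Nash equilibrium of M, at which the total amount of data collected is m*. -/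
open Set

/-- The standard federated learning mechanism
`[M(m)]ᵢ = a (∑ⱼ mⱼ)` is feasible and individually rational, and the profile
in which only a least-cost agent contributes its standalone-optimal amount
(and all others contribute nothing) is a pure Nash equilibrium, with total
data collected equal to that standalone-optimal amount (catastrophic
free-riding). -/
theorem catastrophic_free_riding
    (n : ℕ) (c : Fin n → ℝ) (hc : ∀ i, 0 < c i)
    (b a : ℝ → ℝ)
    (hb_cont : ContinuousOn b (Ici 0))
    (hb_mono : MonotoneOn b (Ici 0))
    (hb_conc : ConcaveOn ℝ (Ici 0) b)
    (ha_def : ∀ m, a m = max 0 (b m))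
    (ha_zero : a 0 = 0)
    (ha_le_one : ∀ m ∈ Ici (0:ℝ), a m ≤ 1)
    (M : (Fin n → ℝ) → Fin n → ℝ)
    (hM_def : ∀ m i, M m i = a (∑ j, m j))
    (i0 : Fin n) (hi0 : ∀ j, c i0 ≤ c j)
    (mstar : ℝ) (hmstar_nonneg : 0 ≤ mstar)
    (hmstar_max : IsMaxOn (fun m => a m - c i0 * m) (Ici 0) mstar)
    (mhat : Fin n → ℝ) (hmhat : ∀ j, mhat j = if j = i0 then mstar else 0) :
    (∀ m, (∀ j, 0 ≤ m j) → ∀ i, M m i ≤ a (∑ j, m j)) ∧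
    (∀ m, (∀ j, 0 ≤ m j) → ∀ i, a (m i) ≤ M m i) ∧
    ((∀ j, 0 ≤ mhat j) ∧
      ∀ i, ∀ x ∈ Ici (0:ℝ),
        M (Function.update mhat i x) i - c i * x ≤ M mhat i - c i * mhat i) ∧
    ∑ j, mhat j = mstar := by
  have ha_mono : ∀ x y : ℝ, 0 ≤ x → x ≤ y → a x ≤ a y := by
    intro x y hx hxy
    rw [ha_def, ha_def]
    exact max_le_max le_rfl (hb_mono hx (le_trans hx hxy) hxy)
  have hmhat_nonneg : ∀ j, 0 ≤ mhat j := by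
    intro j
    rw [hmhat]
    split <;> simp [hmstar_nonneg]
  have hsum : ∑ j, mhat j = mstar := by
    have : ∀ j ∈ Finset.univ, j ≠ i0 → mhat j = 0 := by
      intro j _ hj; rw [hmhat]; simp [hj]
    rw [Finset.sum_eq_single i0 this (by simp)]
    rw [hmhat]; simp
  have hMhat : M mhat i0 = a mstar := by rw [hM_def, hsum]
  refine ⟨fun m _ i => le_of_eq (hM_def m i), ?_, ⟨hmhat_nonneg, ?_⟩, hsum⟩
  · intro m hm i
    rw [hM_def]
    exact ha_mono _ _ (hm i) (Finset.single_le_sum (fun j _ => hm j) (Finset.mem_univ i))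
  · intro i x hx
    have hx0 : (0:ℝ) ≤ x := hx
    have hupd : ∑ j, Function.update mhat i x j
        = x + ∑ j ∈ Finset.univ.erase i, mhat j := by
      rw [Finset.sum_update_of_mem (Finset.mem_univ i), Finset.erase_eq]
    by_cases hii : i = i0
    · subst hii
      have herase : ∑ j ∈ Finset.univ.erase i, mhat j = 0 := by
        apply Finset.sum_eq_zero
        intro j hj
        rw [hmhat]
        simp [Finset.ne_of_mem_erase hj]
      have hsum' : ∑ j, Function.update mhat i x j = x := by rw [hupd, herase, add_zero]
      have hmi : mhat i = mstar := by rw [hmhat]; simp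
      rw [hM_def, hsum', hM_def, hsum, hmi]
      simpa using hmstar_max hx
    · have herase : ∑ j ∈ Finset.univ.erase i, mhat j = mstar := by
        rw [Finset.sum_eq_single i0]
        · rw [hmhat]; simp
        · intro j _ hj; rw [hmhat]; simp [hj]
        · intro h; exact absurd (Finset.mem_erase.mpr ⟨Ne.symm hii, Finset.mem_univ i0⟩) h
      have hsum' : ∑ j, Function.update mhat i x j = x + mstar := by rw [hupd, herase]
      have hmax : a (mstar + x) - c i0 * (mstar + x) ≤ a mstar - c i0 * mstar :=
        hmstar_max (mem_Ici.mpr (add_nonneg hmstar_nonneg hx0))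
      have hmi : mhat i = 0 := by rw [hmhat]; simp [hii]
      rw [hM_def, hsum', hM_def, hsum, hmi, mul_zero, sub_zero]
      have hexp : c i0 * (mstar + x) = c i0 * mstar + c i0 * x := mul_add _ _ _
      have h1 : a (mstar + x) - a mstar ≤ c i0 * x := by linarith
      have h2 : c i0 * x ≤ c i * x := mul_le_mul_of_nonneg_right (hi0 i) hx0
      have : x + mstar = mstar + x := add_comm _ _
      rw [this]
      linarith
end

section
/- Let a be an accuracy function, and fix a slope s > 0, a baseline m* ≥ 0, and an external contribution Δ ≥ 0. Then there exists a unique m^max ≥ m* such that a(m^max + Δ) = a(m*) + s·(m^max − m*) and a(m + Δ) < a(m*) + s·(m − m*) for all m > m^max. -/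
open Set

/-- Existence and uniqueness of the accuracy-shaping threshold
`m^max`: the unique `m ≥ m*` where the incentive line of slope `s` starting at
`(m*, a(m*))` last meets the feasibility curve `m ↦ a(m + Δ)`, with the curve
strictly below the line afterwards. -/
theorem mmax_exists_unique
    (b a : ℝ → ℝ)
    (hb_cont : ContinuousOn b (Ici 0))
    (hb_mono : MonotoneOn b (Ici 0))
    (hb_conc : ConcaveOn ℝ (Ici 0) b)
    (ha_def : ∀ m, a m = max 0 (b m))
    (ha_zero : a 0 = 0)
    (ha_le_one : ∀ m ∈ Ici (0:ℝ), a m ≤ 1)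
    (s mstar Δ : ℝ) (hs : 0 < s) (hmstar : 0 ≤ mstar) (hΔ : 0 ≤ Δ) :
    ∃! mmax : ℝ, mstar ≤ mmax ∧
      a (mmax + Δ) = a mstar + s * (mmax - mstar) ∧
      ∀ m, mmax < m → a (m + Δ) < a mstar + s * (m - mstar) := by
  have ha_cont : ContinuousOn a (Ici 0) := by
    have h : ContinuousOn (fun m => max 0 (b m)) (Ici 0) :=
      fun x hx => (continuousWithinAt_const).max (hb_cont x hx)
    exact h.congr (fun m _ => ha_def m)
  have ha_nonneg : ∀ m, 0 ≤ a m := fun m => (ha_def m) ▸ le_max_left 0 (b m)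
  have ha_mono : MonotoneOn a (Ici 0) := fun x hx y hy hxy => by
    rw [ha_def x, ha_def y]; exact max_le_max le_rfl (hb_mono hx hy hxy)
  set g : ℝ → ℝ := fun m => a (m + Δ) - (a mstar + s * (m - mstar)) with hgdef
  have hmap : MapsTo (fun m => m + Δ) (Ici mstar) (Ici 0) := fun m hm => by
    simp only [mem_Ici] at *; linarith
  have hg_cont : ContinuousOn g (Ici mstar) := by
    apply ContinuousOn.sub
    · exact ha_cont.comp (continuous_id.add continuous_const).continuousOn hmap
    · exact (continuous_const.add (continuous_const.mul
        (continuous_id.sub continuous_const))).continuousOn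
  set S : Set ℝ := {m | mstar ≤ m ∧ 0 ≤ g m} with hSdef
  have hmem : mstar ∈ S := by
    refine ⟨le_rfl, ?_⟩
    have h1 : a mstar ≤ a (mstar + Δ) :=
      ha_mono (mem_Ici.2 hmstar) (mem_Ici.2 (by linarith)) (by linarith)
    simp only [hgdef]
    ring_nf
    nlinarith
  have hS_ne : S.Nonempty := ⟨mstar, hmem⟩
  have hS_bdd : BddAbove S := by
    refine ⟨mstar + 1 / s, fun m hm => ?_⟩
    obtain ⟨hm1, hm2⟩ := hm
    have h1 : a (m + Δ) ≤ 1 := ha_le_one _ (mem_Ici.2 (by linarith))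
    have h2 : 0 ≤ a mstar := ha_nonneg mstar
    simp only [hgdef] at hm2
    have : s * (m - mstar) ≤ 1 := by nlinarith
    have : m - mstar ≤ 1 / s := by
      rw [le_div_iff₀ hs]; nlinarith
    linarith
  have hS_closed : IsClosed S := by
    have : S = Ici mstar ∩ g ⁻¹' (Ici 0) := by
      ext m; simp [hSdef, mem_Ici]
    rw [this]
    exact hg_cont.preimage_isClosed_of_isClosed isClosed_Ici isClosed_Ici
  set mmax := sSup S with hmmax
  have hmmax_mem : mmax ∈ S := hS_closed.csSup_mem hS_ne hS_bdd
  have hmstar_le : mstar ≤ mmax := hmmax_mem.1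
  have hlt : ∀ m, mmax < m → g m < 0 := by
    intro m hm
    by_contra h
    push_neg at h
    have : m ∈ S := ⟨le_trans hmstar_le hm.le, h⟩
    exact absurd (le_csSup hS_bdd this) (not_le.2 hm)
  have hg0 : g mmax = 0 := by
    rcases eq_or_lt_of_le hmmax_mem.2 with h | h
    · exact h.symm
    · exfalso
      have hc : ContinuousWithinAt g (Ici mstar) mmax :=
        hg_cont mmax (mem_Ici.2 hmstar_le)
      have hev : ∀ᶠ m in nhdsWithin mmax (Ici mstar), 0 < g m :=
        hc.eventually (eventually_gt_nhds h)
      have hle : nhdsWithin mmax (Ioi mmax) ≤ nhdsWithin mmax (Ici mstar) :=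
        nhdsWithin_mono _ (fun x hx => le_trans hmstar_le (le_of_lt hx))
      have hev2 : ∀ᶠ m in nhdsWithin mmax (Ioi mmax), 0 < g m := hle hev
      obtain ⟨m, hm1, hm2⟩ := (hev2.and self_mem_nhdsWithin).exists
      exact absurd hm1 (not_lt.2 (hlt m hm2).le)
  refine ⟨mmax, ⟨hmstar_le, by simpa [hgdef, sub_eq_zero] using hg0,
    fun m hm => by have := hlt m hm; simp only [hgdef] at this; linarith⟩, ?_⟩
  intro y hy
  rcases lt_trichotomy y mmax with h | h | h
  · exfalso
    have := hy.2.2 mmax h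
    have heq : a (mmax + Δ) = a mstar + s * (mmax - mstar) := by
      simpa [hgdef, sub_eq_zero] using hg0
    linarith
  · exact h
  · exfalso
    have h1 := hlt y h
    simp only [hgdef] at h1
    linarith [hy.2.1]
end

section
/- Let a = max(0, b) be an accuracy function with b differentiable on (0, ∞), let c > 0 and ε > 0, and suppose m* > 0 is a maximizer of u(m) = a(m) − c·m with sup_{m ≥ 0} u(m) > 0 (so that b'(m*) = c). Fix Δ ≥ 0 with a(m* + Δ) > a(m*), and let m^max = m^max(m*, c + ε, Δ). Define the accuracy-shaping offer A(m) = a(m) for 0 ≤ m ≤ m*; A(m) = a(m*) + (c + ε)(m − m*) for m* ≤ m ≤ m^max; and A(m) = a(m + Δ) for m ≥ m^max. Then m^max is a maximizer of m ↦ A(m) − c·m over [0, ∞), and A(m) − c·m < A(m^max) − c·m^max for every m < m^max. -/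
open Set

/-- Under the accuracy-shaping offer `A` (with slope `c + ε` on
`[m*, m^max]`), the threshold `m^max` is the unique maximizer of the agent's
utility `m ↦ A(m) - c·m` over `[0, ∞)`: it is a maximizer, and the utility at
every smaller contribution is strictly lower. -/
theorem accuracy_shaping_best_response
    (b a u : ℝ → ℝ) (c ε mstar Δ mmax : ℝ) (A : ℝ → ℝ)
    (hb_cont : ContinuousOn b (Ici 0))
    (hb_mono : MonotoneOn b (Ici 0))
    (hb_conc : ConcaveOn ℝ (Ici 0) b)
    (hb_diff : ∀ m ∈ Ioi (0:ℝ), DifferentiableAt ℝ b m)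
    (ha_def : ∀ m, a m = max 0 (b m))
    (ha_zero : a 0 = 0)
    (ha_le_one : ∀ m ∈ Ici (0:ℝ), a m ≤ 1)
    (hc : 0 < c) (hε : 0 < ε)
    (hu : ∀ m, u m = a m - c * m)
    (hmstar_pos : 0 < mstar)
    (hmstar_max : IsMaxOn u (Ici 0) mstar)
    (hsup_pos : ∃ m ∈ Ici (0:ℝ), 0 < u m)
    (hΔ : 0 ≤ Δ)
    (hgain : a mstar < a (mstar + Δ))
    (hmmax_ge : mstar ≤ mmax)
    (hmmax_eq : a (mmax + Δ) = a mstar + (c + ε) * (mmax - mstar))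
    (hmmax_lt : ∀ m, mmax < m → a (m + Δ) < a mstar + (c + ε) * (m - mstar))
    (hA1 : ∀ m, 0 ≤ m → m ≤ mstar → A m = a m)
    (hA2 : ∀ m, mstar ≤ m → m ≤ mmax → A m = a mstar + (c + ε) * (m - mstar))
    (hA3 : ∀ m, mmax ≤ m → A m = a (m + Δ)) :
    IsMaxOn (fun m => A m - c * m) (Ici 0) mmax ∧
    ∀ m ∈ Ici (0:ℝ), m < mmax → A m - c * m < A mmax - c * mmax := by
  -- basic facts
  have humstar : 0 < u mstar := by
    obtain ⟨m, hm, hum⟩ := hsup_pos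
    exact lt_of_lt_of_le hum (hmstar_max hm)
  have hamstar : c * mstar < a mstar := by
    have := hu mstar; linarith
  have hbmstar : b mstar = a mstar := by
    have h1 : 0 < a mstar := lt_trans (mul_pos hc hmstar_pos) hamstar
    rw [ha_def] at h1 ⊢
    rcases le_or_gt (b mstar) 0 with h | h
    · simp [max_eq_left h] at h1
    · simp [max_eq_right h.le]
  -- a = b on [mstar, ∞)
  have hab : ∀ m, mstar ≤ m → a m = b m := by
    intro m hm
    have hbm : b mstar ≤ b m := hb_mono (le_of_lt hmstar_pos) (le_trans hmstar_pos.le hm) hm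
    have : 0 < b m := lt_of_lt_of_le (by rw [hbmstar]; exact lt_trans (mul_pos hc hmstar_pos) hamstar) hbm
    rw [ha_def, max_eq_right this.le]
  -- mstar < mmax
  have hlt : mstar < mmax := by
    rcases lt_or_eq_of_le hmmax_ge with h | h
    · exact h
    · exfalso; rw [← h] at hmmax_eq; simp at hmmax_eq; linarith
  -- value at mmax
  have hAmmax : A mmax = a mstar + (c + ε) * (mmax - mstar) :=
    hA2 mmax hmmax_ge le_rfl
  -- slope bound from mstar maximality: for y ≥ mstar, b y - b mstar ≤ c * (y - mstar)
  have hslope : ∀ y, mstar ≤ y → b y - b mstar ≤ c * (y - mstar) := by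
    intro y hy
    have huy : u y ≤ u mstar := hmstar_max (le_trans hmstar_pos.le hy)
    rw [hu, hu] at huy
    have : b y ≤ a y := by rw [ha_def]; exact le_max_right _ _
    rw [hbmstar]; linarith
  -- key bound for m > mmax : b (m+Δ) - b (mmax+Δ) ≤ c * (m - mmax)
  have hkey : ∀ m, mmax < m → b (m + Δ) - b (mmax + Δ) ≤ c * (m - mmax) := by
    intro m hm
    have hy : mstar < mmax + Δ := lt_of_lt_of_le hlt (by linarith)
    have hz : mmax + Δ < m + Δ := by linarith
    have hsl := hb_conc.slope_anti_adjacent (x := mstar) (y := mmax + Δ) (z := m + Δ)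
      hmstar_pos.le (by simp; linarith) hy hz
    have h1 : (b (mmax + Δ) - b mstar) / (mmax + Δ - mstar) ≤ c := by
      rw [div_le_iff₀ (by linarith)]
      have := hslope (mmax + Δ) (by linarith)
      linarith [this]
    have h2 : (b (m + Δ) - b (mmax + Δ)) / (m + Δ - (mmax + Δ)) ≤ c := le_trans hsl h1
    rw [div_le_iff₀ (by linarith)] at h2
    have : m + Δ - (mmax + Δ) = m - mmax := by ring
    rw [this] at h2; linarith
  -- main comparison: ∀ m ∈ Ici 0, value ≤ value at mmax, strict if m < mmax
  have hmain : ∀ m, 0 ≤ m → A m - c * m ≤ A mmax - c * mmax := by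
    intro m hm
    rcases le_or_gt m mstar with h1 | h1
    · rw [hA1 m hm h1, hAmmax]
      have hmx : u m ≤ u mstar := hmstar_max (mem_Ici.mpr hm)
      rw [hu, hu] at hmx
      have hε' : 0 ≤ ε * (mmax - mstar) := mul_nonneg hε.le (by linarith)
      nlinarith
    rcases le_or_gt m mmax with h2 | h2
    · rw [hA2 m h1.le h2, hAmmax]
      nlinarith [mul_nonneg hε.le (sub_nonneg.mpr h2)]
    · rw [hA3 m h2.le, hAmmax, ← hmmax_eq, hab (m + Δ) (by linarith),
        hab (mmax + Δ) (by linarith)]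
      have := hkey m h2
      linarith
  constructor
  · intro m hm
    exact hmain m hm
  · intro m hm hmlt
    rcases le_or_gt m mstar with h1 | h1
    · rw [hA1 m hm h1, hAmmax]
      have hmx : u m ≤ u mstar := hmstar_max hm
      rw [hu, hu] at hmx
      nlinarith [mul_pos hε (sub_pos.mpr hlt)]
    · rw [hA2 m h1.le hmlt.le, hAmmax]
      nlinarith [mul_pos hε (sub_pos.mpr hmlt)]
end

section
/- Let a be an accuracy function, s > 0 a slope, and m* ≥ 0 a baseline. Then the threshold m^max(m*, s, Δ) is nondecreasing in the external contribution: for all 0 ≤ Δ₁ ≤ Δ₂, m^max(m*, s, Δ₁) ≤ m^max(m*, s, Δ₂). -/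
open Set

/-- The accuracy-shaping threshold `m^max(m*, s, Δ)` is
nondecreasing in the external contribution `Δ`. -/
theorem mmax_monotone_in_external_contribution
    (b a : ℝ → ℝ)
    (hb_cont : ContinuousOn b (Ici 0))
    (hb_mono : MonotoneOn b (Ici 0))
    (hb_conc : ConcaveOn ℝ (Ici 0) b)
    (ha_def : ∀ m, a m = max 0 (b m))
    (ha_zero : a 0 = 0)
    (ha_le_one : ∀ m ∈ Ici (0:ℝ), a m ≤ 1)
    (s mstar : ℝ) (hs : 0 < s) (hmstar : 0 ≤ mstar)
    (Δ1 Δ2 m1 m2 : ℝ) (hΔ1 : 0 ≤ Δ1) (hΔ12 : Δ1 ≤ Δ2)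
    (h1_ge : mstar ≤ m1)
    (h1_eq : a (m1 + Δ1) = a mstar + s * (m1 - mstar))
    (h1_lt : ∀ m, m1 < m → a (m + Δ1) < a mstar + s * (m - mstar))
    (h2_ge : mstar ≤ m2)
    (h2_eq : a (m2 + Δ2) = a mstar + s * (m2 - mstar))
    (h2_lt : ∀ m, m2 < m → a (m + Δ2) < a mstar + s * (m - mstar)) :
    m1 ≤ m2 := by
  by_contra h
  push_neg at h
  have hlt := h2_lt m1 h
  have h0 : (0:ℝ) ≤ m1 + Δ1 := by linarith
  have hmono : a (m1 + Δ1) ≤ a (m1 + Δ2) := by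
    rw [ha_def, ha_def]
    exact max_le_max le_rfl (hb_mono (mem_Ici.mpr h0) (mem_Ici.mpr (by linarith)) (by linarith))
  rw [h1_eq] at hmono
  linarith
end

section
/- Let a = max(0, b) be an accuracy function with b differentiable on (0, ∞). Let 0 < c_L < c_H be two marginal costs and let 0 < ε < c_H − c_L. Suppose m_H* > 0 maximizes a(m) − c_H·m with sup_{m ≥ 0}(a(m) − c_H·m) > 0, and m_L* > 0 maximizes a(m) − c_L·m with sup_{m ≥ 0}(a(m) − c_L·m) > 0. Fix Δ ≥ 0 and parameters m_H* ≤ m^↑ ≤ m^↓ with m^↓ + Δ ≥ m_L* and satisfying the matching condition a(m^↓ + Δ) − (c_L + ε)(m^↓ − m^↑) = a(m_H*) + (c_H + ε)(m^↑ − m_H*). Define the offer A(m) = a(m) for 0 ≤ m ≤ m_H*; A(m) = a(m_H*) + (c_H + ε)(m − m_H*) for m_H* ≤ m ≤ m^↑; A(m) = a(m^↓ + Δ) − (c_L + ε)(m^↓ − m) for m^↑ ≤ m ≤ m^↓; and A(m) = a(m + Δ) for m ≥ m^↓. Then: (i) m^↑ is a maximizer of m ↦ A(m) − c_H·m over [0,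 ∞); and (ii) m^↓ is a maximizer of m ↦ A(m) − c_L·m over [0, ∞). -/
/-!
Past the low-cost optimum `m_L*` the accuracy function agrees with the concave `b`, so all its
chords there have slope at most `c_L`. Hence the menu rises with slope at least `c_H` up to `m^↑`
(by optimality of `m_H*`, then by construction), with slope `c_L + ε ∈ (c_L, c_H)` on
`[m^↑, m^↓]` (the matching condition glues the two linear pieces), and with slope at most `c_L`
beyond `m^↓`. An agent of cost `c` gains from moving right exactly where the slope exceeds `c`.
-/

open Set

theorem ConcaveOn.sub_le_mul_sub_of_isMaxOn {s : Set ℝ} {f : ℝ → ℝ} {c x₀ x y : ℝ}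
    (hf : ConcaveOn ℝ s f) (hmax : IsMaxOn (fun m => f m - c * m) s x₀) (hx₀ : x₀ ∈ s)
    (hy : y ∈ s) (h₀x : x₀ ≤ x) (hxy : x ≤ y) : f y - f x ≤ c * (y - x) := by
  have hy_max : f y - c * y ≤ f x₀ - c * x₀ := hmax hy
  rcases h₀x.eq_or_lt with rfl | h₀x
  · linarith
  rcases hxy.eq_or_lt with rfl | hxy
  · simp
  -- concavity puts `f x` above the chord from `x₀` to `y`, whose slope is at most `c`
  have hchord := hf.neg.secant_mono_aux1 hx₀ hy h₀x hxy
  simp only [Pi.neg_apply] at hchord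
  have hscaled : (y - x₀) * (f y - f x - c * (y - x)) ≤ 0 := by
    linarith [mul_nonneg (sub_nonneg.2 hxy.le) (sub_nonneg.2 hy_max)]
  linarith [nonpos_of_mul_nonpos_right hscaled (by linarith)]

section Accuracy

variable {a b : ℝ → ℝ}

theorem accuracy_eqOn_Ici (hb_mono : MonotoneOn b (Ici 0)) (ha : ∀ m, a m = max 0 (b m))
    {x₀ : ℝ} (hx₀ : 0 ≤ x₀) (hb : 0 ≤ b x₀) : EqOn a b (Ici x₀) := fun m hm => by
  rw [ha m, max_eq_right (hb.trans (hb_mono hx₀ (hx₀.trans hm) hm))]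

theorem accuracy_sub_le_of_isMaxOn (hb_mono : MonotoneOn b (Ici 0))
    (hb_conc : ConcaveOn ℝ (Ici 0) b) (ha : ∀ m, a m = max 0 (b m)) {c x₀ x y : ℝ}
    (hx₀ : 0 ≤ x₀) (hpos : 0 < a x₀) (hmax : IsMaxOn (fun m => a m - c * m) (Ici 0) x₀)
    (h₀x : x₀ ≤ x) (hxy : x ≤ y) : a y - a x ≤ c * (y - x) := by
  have hb : 0 ≤ b x₀ := by
    rw [ha, lt_max_iff] at hpos
    exact hpos.resolve_left (lt_irrefl 0) |>.le
  have hconc : ConcaveOn ℝ (Ici x₀) a :=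
    (hb_conc.subset (Ici_subset_Ici.2 hx₀) (convex_Ici x₀)).congr
      (accuracy_eqOn_Ici hb_mono ha hx₀ hb).symm
  exact hconc.sub_le_mul_sub_of_isMaxOn (hmax.on_subset (Ici_subset_Ici.2 hx₀)) self_mem_Ici
    (h₀x.trans hxy) h₀x hxy

end Accuracy

theorem isMaxOn_sub_mul_pair_of_slopes {A : ℝ → ℝ} {cL cH ε p q : ℝ} (hε : 0 ≤ ε)
    (hcH : cL + ε ≤ cH) (hpq : p ≤ q)
    (hleft : ∀ m, 0 ≤ m → m ≤ p → cH * (p - m) ≤ A p - A m)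
    (hmid : ∀ m, p ≤ m → m ≤ q → A m = A p + (cL + ε) * (m - p))
    (htail : ∀ m, q ≤ m → A m - A q ≤ cL * (m - q)) :
    IsMaxOn (fun m => A m - cH * m) (Ici 0) p ∧ IsMaxOn (fun m => A m - cL * m) (Ici 0) q := by
  have hq := hmid q hpq le_rfl
  have hLH : cL ≤ cH := by linarith
  constructor
  · intro m hm
    show A m - cH * m ≤ A p - cH * p
    rcases le_total m p with hmp | hpm
    · linarith [hleft m hm hmp]
    rcases le_total m q with hmq | hqm
    · linarith [hmid m hpm hmq, mul_le_mul_of_nonneg_right hcH (sub_nonneg.2 hpm)]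
    · linarith [htail m hqm, mul_le_mul_of_nonneg_right hcH (sub_nonneg.2 hpq),
        mul_le_mul_of_nonneg_right hLH (sub_nonneg.2 hqm)]
  · intro m hm
    show A m - cL * m ≤ A q - cL * q
    rcases le_total q m with hqm | hmq
    · linarith [htail m hqm]
    rcases le_total p m with hpm | hmp
    · linarith [hmid m hpm hmq, mul_nonneg hε (sub_nonneg.2 hmq)]
    · linarith [hleft m hm hmp, mul_nonneg hε (sub_nonneg.2 hpq),
        mul_le_mul_of_nonneg_right hLH (sub_nonneg.2 hmp)]

theorem unverifiable_costs_best_responses_general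
    (b a : ℝ → ℝ)
    (hb_mono : MonotoneOn b (Ici 0))
    (hb_conc : ConcaveOn ℝ (Ici 0) b)
    (ha_def : ∀ m, a m = max 0 (b m))
    (cL cH ε : ℝ) (hcL : 0 < cL)
    (hε : 0 < ε) (hε_bound : ε < cH - cL)
    (mHstar mLstar : ℝ) (hmL_pos : 0 < mLstar)
    (hmH_max : IsMaxOn (fun m => a m - cH * m) (Ici 0) mHstar)
    (hmL_max : IsMaxOn (fun m => a m - cL * m) (Ici 0) mLstar)
    (hmL_sup : ∃ m ∈ Ici (0:ℝ), 0 < a m - cL * m)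
    (Δ mup mdown : ℝ)
    (hup_ge : mHstar ≤ mup) (hud : mup ≤ mdown) (hdown_ge : mLstar ≤ mdown + Δ)
    (hmatch : a (mdown + Δ) - (cL + ε) * (mdown - mup)
      = a mHstar + (cH + ε) * (mup - mHstar))
    (A : ℝ → ℝ)
    (hA1 : ∀ m, 0 ≤ m → m ≤ mHstar → A m = a m)
    (hA2 : ∀ m, mHstar ≤ m → m ≤ mup →
      A m = a mHstar + (cH + ε) * (m - mHstar))
    (hA3 : ∀ m, mup ≤ m → m ≤ mdown →
      A m = a (mdown + Δ) - (cL + ε) * (mdown - m))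
    (hA4 : ∀ m, mdown ≤ m → A m = a (m + Δ)) :
    IsMaxOn (fun m => A m - cH * m) (Ici 0) mup ∧
    IsMaxOn (fun m => A m - cL * m) (Ici 0) mdown := by
  have hAup := hA2 mup hup_ge le_rfl
  have hleft : ∀ m, 0 ≤ m → m ≤ mup → cH * (mup - m) ≤ A mup - A m := by
    intro m hm hmup
    rcases le_total m mHstar with hmH | hmH
    · have hopt : a m - cH * m ≤ a mHstar - cH * mHstar := hmH_max (mem_Ici.2 hm)
      rw [hA1 m hm hmH]
      linarith [mul_nonneg hε.le (sub_nonneg.2 hup_ge)]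
    · rw [hA2 m hmH hmup]
      linarith [mul_nonneg hε.le (sub_nonneg.2 hmup)]
  have hmid : ∀ m, mup ≤ m → m ≤ mdown → A m = A mup + (cL + ε) * (m - mup) := by
    intro m hm hmd
    rw [hA3 m hm hmd]
    linarith
  have hpos : 0 < a mLstar := by
    obtain ⟨m₀, hm₀, hsurplus⟩ := hmL_sup
    have hopt : a m₀ - cL * m₀ ≤ a mLstar - cL * mLstar := hmL_max hm₀
    linarith [mul_pos hcL hmL_pos]
  have htail : ∀ m, mdown ≤ m → A m - A mdown ≤ cL * (m - mdown) := by
    intro m hm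
    rw [hA4 m hm, hA4 mdown le_rfl]
    linarith [accuracy_sub_le_of_isMaxOn hb_mono hb_conc ha_def hmL_pos.le hpos hmL_max hdown_ge
      (add_le_add_left hm Δ)]
  have hcH : cL + ε ≤ cH := by linarith
  exact isMaxOn_sub_mul_pair_of_slopes hε.le hcH hud hleft hmid htail

/-- The accuracy-shaping menu under unverifiable costs: the
intended contribution `m^↑` is a best response for a high-cost agent, and
`m^↓` is a best response for a low-cost agent. -/
theorem unverifiable_costs_best_responses
    (b a : ℝ → ℝ)
    (hb_cont : ContinuousOn b (Ici 0))
    (hb_mono : MonotoneOn b (Ici 0))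
    (hb_conc : ConcaveOn ℝ (Ici 0) b)
    (hb_diff : ∀ m ∈ Ioi (0:ℝ), DifferentiableAt ℝ b m)
    (ha_def : ∀ m, a m = max 0 (b m))
    (ha_zero : a 0 = 0)
    (ha_le_one : ∀ m ∈ Ici (0:ℝ), a m ≤ 1)
    (cL cH ε : ℝ) (hcL : 0 < cL) (hcLH : cL < cH)
    (hε : 0 < ε) (hε_bound : ε < cH - cL)
    (mHstar mLstar : ℝ) (hmH_pos : 0 < mHstar) (hmL_pos : 0 < mLstar)
    (hmH_max : IsMaxOn (fun m => a m - cH * m) (Ici 0) mHstar)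
    (hmH_sup : ∃ m ∈ Ici (0:ℝ), 0 < a m - cH * m)
    (hmL_max : IsMaxOn (fun m => a m - cL * m) (Ici 0) mLstar)
    (hmL_sup : ∃ m ∈ Ici (0:ℝ), 0 < a m - cL * m)
    (Δ mup mdown : ℝ) (hΔ : 0 ≤ Δ)
    (hup_ge : mHstar ≤ mup) (hud : mup ≤ mdown) (hdown_ge : mLstar ≤ mdown + Δ)
    (hmatch : a (mdown + Δ) - (cL + ε) * (mdown - mup)
      = a mHstar + (cH + ε) * (mup - mHstar))
    (A : ℝ → ℝ)
    (hA1 : ∀ m, 0 ≤ m → m ≤ mHstar → A m = a m)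
    (hA2 : ∀ m, mHstar ≤ m → m ≤ mup →
      A m = a mHstar + (cH + ε) * (m - mHstar))
    (hA3 : ∀ m, mup ≤ m → m ≤ mdown →
      A m = a (mdown + Δ) - (cL + ε) * (mdown - m))
    (hA4 : ∀ m, mdown ≤ m → A m = a (m + Δ)) :
    IsMaxOn (fun m => A m - cH * m) (Ici 0) mup ∧
    IsMaxOn (fun m => A m - cL * m) (Ici 0) mdown :=
  unverifiable_costs_best_responses_general b a hb_mono hb_conc ha_def cL cH ε hcL hε hε_bound
    mHstar mLstar hmL_pos hmH_max hmL_max hmL_sup Δ mup mdown hup_ge hud hdown_ge hmatch A hA1 hA2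
    hA3 hA4
end

section
/- In the setting of the accuracy-shaping mechanism under unverifiable costs with offer A and parameters m_H* ≤ m^↑ ≤ m^↓ (with the matching condition and all hypotheses as stated there), the following hold. (i) The high-cost agent's utility at m^↑ satisfies A(m^↑) − c_H·m^↑ = (a(m_H*) − c_H·m_H*) + ε·(m^↑ − m_H*); in particular as ε → 0⁺ it equals the standalone optimal utility. (ii) Let m_L^max = m^max(m_L*, c_L, Δ) and suppose m^↓ ≤ m_L^max. Then the low-cost agent's utility at m^↓ exceeds the standalone optimum by exactly the information rent c_L·(m_L^max − m^↓) − a(m_L^max + Δ) + a(m^↓ + Δ), i.e. a(m^↓ + Δ) − c_L·m^↓ − (a(m_L*) − c_L·m_L*) = c_L·(m_L^max − m^↓) − a(m_L^max + Δ) + a(m^↓ + Δ), and this quantity is nonnegative. -/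
open Set

/-- Information rent under unverifiable costs: the high-cost
agent's utility at `m^↑` equals its standalone optimum plus `ε·(m^↑ - m_H*)`,
and the low-cost agent's utility at `m^↓` exceeds its standalone optimum by
exactly the (nonnegative) information rent
`c_L·(m_L^max - m^↓) - a(m_L^max + Δ) + a(m^↓ + Δ)`. -/
theorem information_rent
    (b a : ℝ → ℝ)
    (hb_cont : ContinuousOn b (Ici 0))
    (hb_mono : MonotoneOn b (Ici 0))
    (hb_conc : ConcaveOn ℝ (Ici 0) b)
    (hb_diff : ∀ m ∈ Ioi (0:ℝ), DifferentiableAt ℝ b m)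
    (ha_def : ∀ m, a m = max 0 (b m))
    (ha_zero : a 0 = 0)
    (ha_le_one : ∀ m ∈ Ici (0:ℝ), a m ≤ 1)
    (cL cH ε : ℝ) (hcL : 0 < cL) (hcLH : cL < cH)
    (hε : 0 < ε) (hε_bound : ε < cH - cL)
    (mHstar mLstar : ℝ) (hmH_pos : 0 < mHstar) (hmL_pos : 0 < mLstar)
    (hmH_max : IsMaxOn (fun m => a m - cH * m) (Ici 0) mHstar)
    (hmH_sup : ∃ m ∈ Ici (0:ℝ), 0 < a m - cH * m)
    (hmL_max : IsMaxOn (fun m => a m - cL * m) (Ici 0) mLstar)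
    (hmL_sup : ∃ m ∈ Ici (0:ℝ), 0 < a m - cL * m)
    (Δ mup mdown : ℝ) (hΔ : 0 ≤ Δ)
    (hup_ge : mHstar ≤ mup) (hud : mup ≤ mdown) (hdown_ge : mLstar ≤ mdown + Δ)
    (hmatch : a (mdown + Δ) - (cL + ε) * (mdown - mup)
      = a mHstar + (cH + ε) * (mup - mHstar))
    (A : ℝ → ℝ)
    (hA1 : ∀ m, 0 ≤ m → m ≤ mHstar → A m = a m)
    (hA2 : ∀ m, mHstar ≤ m → m ≤ mup →
      A m = a mHstar + (cH + ε) * (m - mHstar))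
    (hA3 : ∀ m, mup ≤ m → m ≤ mdown →
      A m = a (mdown + Δ) - (cL + ε) * (mdown - m))
    (hA4 : ∀ m, mdown ≤ m → A m = a (m + Δ))
    -- m_L^max = m^max(m_L*, c_L, Δ)
    (mLmax : ℝ)
    (hmLmax_ge : mLstar ≤ mLmax)
    (hmLmax_eq : a (mLmax + Δ) = a mLstar + cL * (mLmax - mLstar))
    (hmLmax_lt : ∀ m, mLmax < m → a (m + Δ) < a mLstar + cL * (m - mLstar))
    (hdown_le : mdown ≤ mLmax) :
    A mup - cH * mup = (a mHstar - cH * mHstar) + ε * (mup - mHstar) ∧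
    (a (mdown + Δ) - cL * mdown - (a mLstar - cL * mLstar)
      = cL * (mLmax - mdown) - a (mLmax + Δ) + a (mdown + Δ) ∧
     0 ≤ cL * (mLmax - mdown) - a (mLmax + Δ) + a (mdown + Δ)) := by
  have h1 : A mup - cH * mup = (a mHstar - cH * mHstar) + ε * (mup - mHstar) := by
    rw [hA2 mup hup_ge le_rfl]; ring
  refine ⟨h1, ?_, ?_⟩
  · rw [hmLmax_eq]; ring
  · -- standalone optimum is positive
    obtain ⟨m, hm, hmp⟩ := hmL_sup
    have hmax := hmL_max hm
    simp only at hmax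
    have hLpos : 0 < a mLstar - cL * mLstar := lt_of_lt_of_le hmp hmax
    have haL_pos : 0 < a mLstar := by nlinarith [mul_pos hcL hmL_pos]
    have hbL : b mLstar = a mLstar := by
      have h0 := haL_pos
      rw [ha_def] at h0
      rcases lt_max_iff.mp h0 with h | h
      · exact absurd h (lt_irrefl 0)
      · rw [ha_def]; exact (max_eq_right h.le).symm
    have haMax_pos : 0 < a (mLmax + Δ) := by
      have : 0 ≤ cL * (mLmax - mLstar) := mul_nonneg hcL.le (by linarith)
      rw [hmLmax_eq]; linarith
    have hbMax : b (mLmax + Δ) = a (mLmax + Δ) := by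
      have h0 := haMax_pos
      rw [ha_def] at h0
      rcases lt_max_iff.mp h0 with h | h
      · exact absurd h (lt_irrefl 0)
      · rw [ha_def]; exact (max_eq_right h.le).symm
    by_cases hxy : mLstar - Δ = mLmax
    · have hmd : mdown = mLmax := le_antisymm hdown_le (by linarith)
      rw [hmd]
      have : cL * (mLmax - mLmax) = 0 := by ring
      linarith
    · have hx_lt : mLstar - Δ < mLmax := lt_of_le_of_ne (by linarith) hxy
      set t : ℝ := (mdown - (mLstar - Δ)) / (mLmax - (mLstar - Δ)) with ht_def
      have hden : 0 < mLmax - (mLstar - Δ) := by linarith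
      have ht0 : 0 ≤ t := div_nonneg (by linarith) hden.le
      have ht1 : t ≤ 1 := (div_le_one hden).mpr (by linarith)
      have htmul : t * (mLmax - (mLstar - Δ)) = mdown - (mLstar - Δ) :=
        div_mul_cancel₀ _ hden.ne'
      have hcomb := hb_conc.2 (mem_Ici.mpr hmL_pos.le)
        (mem_Ici.mpr (by linarith : (0:ℝ) ≤ mLmax + Δ))
        (by linarith : (0:ℝ) ≤ 1 - t) ht0 (by ring)
      simp only [smul_eq_mul] at hcomb
      have harg : (1 - t) * mLstar + t * (mLmax + Δ) = mdown + Δ := by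
        linear_combination htmul
      rw [harg, hbL, hbMax] at hcomb
      have hge : b (mdown + Δ) ≤ a (mdown + Δ) := by
        rw [ha_def]; exact le_max_right _ _
      -- mdown in terms of t
      nlinarith [mul_nonneg (mul_nonneg (by linarith : (0:ℝ) ≤ 1 - t) hcL.le) hΔ,
        mul_nonneg ht0 hcL.le]
end

section
/- Let k > 0, c > 0, a_opt > 0 and let n > 0 satisfy n ≥ 32·c·k/a_opt³. Define a(m) = max(0, a_opt − 2√(k/m)) for m > 0 and a(0) = 0. Then there exists m^tot ≥ a_opt·n/(2c) such that (c/n)·m^tot = a(m^tot). -/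
open Set

/-- Overcoming minimum viability by cost sharing: for
`n ≥ 32·c·k/a_opt³` agents with common marginal cost `c`, the equation
`(c/n)·m = a(m)` for `a(m) = max (0, a_opt - 2√(k/m))` has a solution
`m^tot ≥ a_opt·n/(2c)`. -/
theorem collaborative_viability
    (k c aopt n : ℝ) (hk : 0 < k) (hc : 0 < c) (haopt : 0 < aopt)
    (hn : 0 < n) (hn_large : 32 * c * k / aopt ^ 3 ≤ n)
    (a : ℝ → ℝ)
    (ha_pos : ∀ m, 0 < m → a m = max 0 (aopt - 2 * Real.sqrt (k / m)))
    (ha_zero : a 0 = 0) :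
    ∃ mtot, aopt * n / (2 * c) ≤ mtot ∧ c / n * mtot = a mtot := by
  set m0 : ℝ := aopt * n / (2 * c) with hm0
  set m1 : ℝ := aopt * n / c with hm1
  have hm0pos : 0 < m0 := by positivity
  have hm01 : m0 ≤ m1 := by
    rw [hm0, hm1, div_le_div_iff₀ (by positivity) hc]
    nlinarith [mul_pos (mul_pos haopt hn) hc]
  set F : ℝ → ℝ := fun m => c / n * m - max 0 (aopt - 2 * Real.sqrt (k / m)) with hF
  have hcont : ContinuousOn F (Icc m0 m1) := by
    have hs : ContinuousOn (fun m : ℝ => Real.sqrt (k / m)) (Icc m0 m1) := by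
      apply ContinuousOn.sqrt
      exact ContinuousOn.div continuousOn_const continuousOn_id
        (fun x hx => ne_of_gt (lt_of_lt_of_le hm0pos hx.1))
    exact ((continuousOn_const.mul continuousOn_id).sub
      (continuousOn_const.sup (continuousOn_const.sub (continuousOn_const.mul hs))))
  -- m0 ≥ 16 k / aopt^2
  have hm0big : 16 * k / aopt ^ 2 ≤ m0 := by
    rw [hm0, div_le_div_iff₀ (by positivity) (by positivity)]
    rw [div_le_iff₀ (by positivity)] at hn_large
    nlinarith
  have hsqrt : Real.sqrt (k / m0) ≤ aopt / 4 := by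
    have h1 : k / m0 ≤ (aopt / 4) ^ 2 := by
      rw [div_le_iff₀ hm0pos]
      rw [div_le_iff₀ (by positivity : (0:ℝ) < aopt ^ 2)] at hm0big
      nlinarith
    calc Real.sqrt (k / m0) ≤ Real.sqrt ((aopt / 4) ^ 2) := Real.sqrt_le_sqrt h1
      _ = aopt / 4 := Real.sqrt_sq (by positivity)
  have hF0 : F m0 ≤ 0 := by
    have hc0 : c / n * m0 = aopt / 2 := by
      rw [hm0]; field_simp
    have : aopt / 2 ≤ max 0 (aopt - 2 * Real.sqrt (k / m0)) := by
      refine le_max_of_le_right ?_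
      nlinarith
    simp only [hF, hc0]; linarith
  have hF1 : 0 ≤ F m1 := by
    have hc1 : c / n * m1 = aopt := by
      rw [hm1]; field_simp
    have hsq : 0 ≤ Real.sqrt (k / m1) := Real.sqrt_nonneg _
    have : max 0 (aopt - 2 * Real.sqrt (k / m1)) ≤ aopt := by
      apply max_le (le_of_lt haopt); linarith
    simp only [hF, hc1]; linarith
  have := intermediate_value_Icc hm01 hcont
  have h0mem : (0:ℝ) ∈ Icc (F m0) (F m1) := ⟨hF0, hF1⟩
  obtain ⟨m, hm, hFm⟩ := this h0mem
  refine ⟨m, hm.1, ?_⟩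
  have hmpos : 0 < m := lt_of_lt_of_le hm0pos hm.1
  rw [ha_pos m hmpos]
  have : c / n * m - max 0 (aopt - 2 * Real.sqrt (k / m)) = 0 := hFm
  linarith
end

section
/- Let k > 0 and c > 0, and for an integer n ≥ 3 define S_n = { m > 0 : c·m + 2·√(k/(n·m)) ≤ 3·(c·k)^{1/3} }. Then (3/2)·k^{1/3}·c^{−2/3} ∈ S_n, and every m ∈ S_n satisfies m ≤ 3·k^{1/3}·c^{−2/3}; in particular sup S_n ∈ [(3/2)·k^{1/3}·c^{−2/3}, 3·k^{1/3}·c^{−2/3}]. -/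
open Set

/-- Bounds on the equilibrium contribution under the
accuracy-shaping mechanism with `n ≥ 3` equal-cost agents: the set
`S_n = {m > 0 : c·m + 2√(k/(n·m)) ≤ 3(c·k)^(1/3)}` contains
`(3/2)·k^(1/3)·c^(-2/3)`, is bounded above by `3·k^(1/3)·c^(-2/3)`, and hence
its supremum lies in `[(3/2)·k^(1/3)·c^(-2/3), 3·k^(1/3)·c^(-2/3)]`. -/
theorem equilibrium_contribution_bounds
    (k c : ℝ) (hk : 0 < k) (hc : 0 < c) (n : ℕ) (hn : 3 ≤ n)
    (S : Set ℝ)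
    (hS : S = {m : ℝ | 0 < m ∧
      c * m + 2 * Real.sqrt (k / (n * m)) ≤ 3 * (c * k) ^ ((1:ℝ)/3)}) :
    (3 / 2 * k ^ ((1:ℝ)/3) * c ^ (-(2:ℝ)/3) ∈ S) ∧
    (∀ m ∈ S, m ≤ 3 * k ^ ((1:ℝ)/3) * c ^ (-(2:ℝ)/3)) ∧
    sSup S ∈ Icc (3 / 2 * k ^ ((1:ℝ)/3) * c ^ (-(2:ℝ)/3))
      (3 * k ^ ((1:ℝ)/3) * c ^ (-(2:ℝ)/3)) := by
  set a : ℝ := k ^ ((1:ℝ)/3) with ha_def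
  set b : ℝ := c ^ ((1:ℝ)/3) with hb_def
  have ha : 0 < a := Real.rpow_pos_of_pos hk _
  have hb : 0 < b := Real.rpow_pos_of_pos hc _
  have ha3 : a ^ 3 = k := by
    rw [ha_def, ← Real.rpow_natCast (k ^ ((1:ℝ)/3)) 3, ← Real.rpow_mul hk.le]
    norm_num
  have hb3 : b ^ 3 = c := by
    rw [hb_def, ← Real.rpow_natCast (c ^ ((1:ℝ)/3)) 3, ← Real.rpow_mul hc.le]
    norm_num
  have hck : (c * k) ^ ((1:ℝ)/3) = b * a := by
    rw [Real.mul_rpow hc.le hk.le]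
  have hcn : c ^ (-(2:ℝ)/3) = (b ^ 2)⁻¹ := by
    rw [hb_def, ← Real.rpow_natCast (c ^ ((1:ℝ)/3)) 2, ← Real.rpow_mul hc.le,
      ← Real.rpow_neg hc.le]
    norm_num
  have hnR : (3:ℝ) ≤ (n:ℝ) := by exact_mod_cast hn
  have hnpos : (0:ℝ) < n := by linarith
  -- the candidate point
  set m0 : ℝ := 3 / 2 * a * (b ^ 2)⁻¹ with hm0_def
  have hm0pos : 0 < m0 := by positivity
  have hmem : m0 ∈ S := by
    rw [hS]
    refine ⟨hm0pos, ?_⟩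
    have hsq : Real.sqrt (k / (n * m0)) ≤ 3 / 4 * (a * b) := by
      have h1 : k / (n * m0) ≤ (3 / 4 * (a * b)) ^ 2 := by
        rw [div_le_iff₀ (by positivity)]
        have hb2 : (0:ℝ) < b ^ 2 := by positivity
        have hinv : (b ^ 2)⁻¹ * b ^ 2 = 1 := inv_mul_cancel₀ (ne_of_gt hb2)
        have key : k * b ^ 2 ≤ (3 / 4 * (a * b)) ^ 2 * ((n:ℝ) * (3 / 2 * a)) := by
          rw [← ha3]
          have hprod : (3:ℝ) * (a ^ 3 * b ^ 2) ≤ (n:ℝ) * (a ^ 3 * b ^ 2) :=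
            mul_le_mul_of_nonneg_right hnR (by positivity)
          nlinarith [hprod, mul_pos (pow_pos ha 3) (pow_pos hb 2)]
        calc k = k * b ^ 2 * (b ^ 2)⁻¹ := by
                field_simp
          _ ≤ (3 / 4 * (a * b)) ^ 2 * ((n:ℝ) * (3 / 2 * a)) * (b ^ 2)⁻¹ := by
                apply mul_le_mul_of_nonneg_right key (by positivity)
          _ = (3 / 4 * (a * b)) ^ 2 * ((n:ℝ) * m0) := by
                rw [hm0_def]; ring
      calc Real.sqrt (k / (n * m0)) ≤ Real.sqrt ((3 / 4 * (a * b)) ^ 2) :=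
            Real.sqrt_le_sqrt h1
        _ = 3 / 4 * (a * b) := Real.sqrt_sq (by positivity)
    have hcm0 : c * m0 = 3 / 2 * a * b := by
      rw [hm0_def, ← hb3]; field_simp
    rw [hck, hcm0]
    nlinarith [hsq]
  have hub : ∀ m ∈ S, m ≤ 3 * a * (b ^ 2)⁻¹ := by
    intro m hm
    rw [hS] at hm
    obtain ⟨hmpos, hle⟩ := hm
    rw [hck] at hle
    have hsq0 : 0 ≤ Real.sqrt (k / (n * m)) := Real.sqrt_nonneg _
    have hcm : c * m ≤ 3 * (b * a) := by linarith
    rw [← hb3] at hcm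
    rw [show (3:ℝ) * a * (b ^ 2)⁻¹ = 3 * a / b ^ 2 by ring, le_div_iff₀ (by positivity)]
    nlinarith [hb, mul_pos hmpos hb]
  have hgoal1 : 3 / 2 * k ^ ((1:ℝ)/3) * c ^ (-(2:ℝ)/3) = m0 := by
    rw [hcn, hm0_def]
  have hgoal2 : 3 * k ^ ((1:ℝ)/3) * c ^ (-(2:ℝ)/3) = 3 * a * (b ^ 2)⁻¹ := by
    rw [hcn]
  refine ⟨by rw [hgoal1]; exact hmem, by rw [hgoal2]; exact hub, ?_⟩
  rw [hgoal1, hgoal2]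
  constructor
  · exact le_csSup ⟨3 * a * (b ^ 2)⁻¹, hub⟩ hmem
  · exact csSup_le ⟨m0, hmem⟩ hub
end
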